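/- arXiv:math/0507518 — 5 statements merged into one kernel-verified Lean document; each statement's English description precedes it below -/
import Mathlib

section
/- If φ: 𝔻 → 𝔻 is a non-affine linear fractional map fixing the point 1, then φ can be written as φ(z) = ((1+q+qd)z + (d-q-qd))/(z+d), where q = φ'(1) > 0 and d ∈ ℂ with |d| > 1. -/
open Metric

private lemma aux_pos_le (x y : ℝ) (h : ∀ t : ℝ, 0 < t → x ≤ t * y) : x ≤ 0 := by
  by_contra hx
  push_neg at hx
  have hs : (0:ℝ) < 2 * (|y| + 1) := by positivity
  have h1 := h (x / (2 * (|y| + 1))) (by positivity)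
  rw [div_mul_eq_mul_div, le_div_iff₀ hs] at h1
  nlinarith [le_abs_self y, abs_nonneg y]

private lemma aux_eps (ε₀ K C : ℝ) (h0 : 0 < ε₀)
    (h : ∀ ε : ℝ, 0 < ε → ε < ε₀ → ε * C < K) : 0 ≤ K := by
  by_contra hK
  push_neg at hK
  rcases le_or_gt 0 C with hC | hC
  · have h1 := h (ε₀ / 2) (by positivity) (by linarith)
    nlinarith
  · have hC0 : C ≠ 0 := ne_of_lt hC
    have hpos : 0 < K / (2 * C) := div_pos_of_neg_of_neg hK (by linarith)
    have h1 := h (min (ε₀ / 2) (K / (2 * C))) (by positivity) (by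
      calc min (ε₀ / 2) (K / (2 * C)) ≤ ε₀ / 2 := min_le_left _ _
        _ < ε₀ := by linarith)
    have h2 : min (ε₀ / 2) (K / (2 * C)) ≤ K / (2 * C) := min_le_right _ _
    have h3 : min (ε₀ / 2) (K / (2 * C)) * C ≥ (K / (2 * C)) * C :=
      mul_le_mul_of_nonpos_right h2 (le_of_lt hC)
    have h4 : (K / (2 * C)) * C = K / 2 := by field_simp
    nlinarith

/-- If `φ : 𝔻 → 𝔻` is a non-affine linear fractional map fixing the point 1, then
`φ(z) = ((1+q+qd)z + (d-q-qd))/(z+d)` where `q = φ'(1) > 0` and `|d| > 1`. -/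
theorem qd_representation (φ : ℂ → ℂ) (a b c d₀ : ℂ)
    (hlf : φ = fun z => (a * z + b) / (c * z + d₀))
    (hdet : a * d₀ - b * c ≠ 0)
    (hnonaffine : c ≠ 0)
    (hmaps : Set.MapsTo φ (ball (0 : ℂ) 1) (ball (0 : ℂ) 1))
    (hfix : φ 1 = 1) :
    ∃ (q : ℝ) (d : ℂ), 0 < q ∧ deriv φ 1 = (q : ℂ) ∧ 1 < ‖d‖ ∧
      ∀ z : ℂ, φ z = ((1 + q + q * d) * z + (d - q - q * d)) / (z + d) := by
  set d : ℂ := d₀ / c with hd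
  set A : ℂ := a / c with hA
  set B : ℂ := b / c with hB
  have hcd : c * d = d₀ := by rw [hd]; field_simp
  have hca : c * A = a := by rw [hA]; field_simp
  have hcb : c * B = b := by rw [hB]; field_simp
  have hφ : ∀ z : ℂ, φ z = (A * z + B) / (z + d) := by
    intro z
    rw [hlf]
    simp only
    rw [show a * z + b = c * (A * z + B) by rw [← hca, ← hcb]; ring,
        show c * z + d₀ = c * (z + d) by rw [← hcd]; ring,
        mul_div_mul_left _ _ hnonaffine]
  -- Step 1: |d| > 1
  have habs_d : 1 < ‖d‖ := by
    by_contra hled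
    push_neg at hled
    have hdet' : b - a * d ≠ 0 := by
      intro h
      apply hdet
      rw [← hcd]
      linear_combination (-c) * h
    set m : ℝ := ‖b - a * d‖ with hm
    have hm0 : 0 < m := norm_pos_iff.mpr hdet'
    set u : ℂ := if d = 0 then 1 else d / (‖d‖ : ℂ) with hu
    have habs_u : ‖u‖ = 1 := by
      rw [hu]
      split_ifs with h0
      · simp
      · rw [norm_div]
        simp [Complex.norm_real, Real.norm_eq_abs, abs_of_nonneg (norm_nonneg d),
          div_self ((norm_ne_zero_iff.mpr h0))]
    set δ : ℝ := if d = 0 then 1 else ‖d‖ with hδ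
    have hδ0 : 0 < δ := by
      rw [hδ]; split_ifs with h0
      · norm_num
      · exact norm_pos_iff.mpr h0
    set ε : ℝ := min (min (δ / 2) (m / (2 * ‖a‖ + 1))) (m / (2 * ‖c‖)) with hε
    have hεa' : 0 < m / (2 * ‖a‖ + 1) := div_pos hm0 (by have := norm_nonneg a; linarith)
    have hεc' : 0 < m / (2 * ‖c‖) := div_pos hm0 (mul_pos two_pos (norm_pos_iff.mpr hnonaffine))
    have hε0 : 0 < ε := lt_min (lt_min (by linarith) hεa') hεc'
    have hεδ : ε < δ := lt_of_le_of_lt (le_trans (min_le_left _ _) (min_le_left _ _)) (by linarith)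
    have hεa : ε * (2 * ‖a‖ + 1) ≤ m := by
      have h1 : ε ≤ m / (2 * ‖a‖ + 1) := le_trans (min_le_left _ _) (min_le_right _ _)
      rw [le_div_iff₀ (by have := norm_nonneg a; linarith)] at h1
      exact h1
    have hεc : ε * (2 * ‖c‖) ≤ m := by
      have h1 : ε ≤ m / (2 * ‖c‖) := min_le_right _ _
      rw [le_div_iff₀ (mul_pos two_pos (norm_pos_iff.mpr hnonaffine))] at h1
      exact h1
    set z : ℂ := -d + (ε : ℂ) * u with hz
    have hzball : z ∈ ball (0 : ℂ) 1 := by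
      rw [mem_ball, dist_zero_right]
      by_cases h0 : d = 0
      · have : z = (ε : ℂ) := by rw [hz, hu]; simp [h0]
        rw [this, Complex.norm_real, Real.norm_eq_abs, abs_of_nonneg hε0.le]
        have : δ = 1 := by rw [hδ]; simp [h0]
        linarith
      · have hzeq : z = d * (((ε / ‖d‖ : ℝ) : ℂ) - 1) := by
          rw [hz, hu]
          simp only [h0, if_false]
          push_cast
          field_simp
          ring
        rw [hzeq, norm_mul]
        have hd0 : (0:ℝ) < ‖d‖ := norm_pos_iff.mpr h0
        have hre : ((ε / ‖d‖ : ℝ) : ℂ) - 1 = ((ε / ‖d‖ - 1 : ℝ) : ℂ) := by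
          push_cast; ring
        rw [hre, Complex.norm_real, Real.norm_eq_abs]
        have hεd : ε < ‖d‖ := by
          rw [hδ] at hεδ; simpa [h0] using hεδ
        have hlt1 : ε / ‖d‖ < 1 := (div_lt_one hd0).mpr hεd
        rw [abs_of_nonpos (by linarith)]
        have h2 : 0 < ε / ‖d‖ := by positivity
        have h3 : ‖d‖ ≤ 1 := hled
        nlinarith
    have hmem := hmaps hzball
    rw [mem_ball, dist_zero_right, hlf] at hmem
    simp only at hmem
    have hden : c * z + d₀ = c * (ε : ℂ) * u := by rw [hz, ← hcd]; ring
    have hnum : a * z + b = (b - a * d) + (ε : ℂ) * (a * u) := by rw [hz]; ring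
    rw [hden, hnum, norm_div] at hmem
    have habs_den : ‖c * (ε:ℂ) * u‖ = ‖c‖ * ε := by
      rw [norm_mul, norm_mul, habs_u, Complex.norm_real, Real.norm_eq_abs, abs_of_nonneg hε0.le]
      ring
    rw [habs_den] at hmem
    have habs_eau : ‖(ε:ℂ) * (a * u)‖ = ε * ‖a‖ := by
      rw [norm_mul, norm_mul, habs_u, Complex.norm_real, Real.norm_eq_abs, abs_of_nonneg hε0.le, mul_one]
    have hnum_lb : m - ε * ‖a‖ ≤ ‖(b - a * d) + (ε:ℂ) * (a * u)‖ := by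
      have htri := norm_add_le ((b - a * d) + (ε:ℂ) * (a * u)) (-((ε:ℂ) * (a * u)))
      rw [show ((b - a * d) + (ε:ℂ) * (a * u)) + (-((ε:ℂ) * (a * u))) = b - a * d by ring,
        norm_neg, habs_eau] at htri
      linarith
    have hmem' : ‖(b - a * d) + (ε:ℂ) * (a * u)‖ < ‖c‖ * ε := by
      rw [div_lt_one (mul_pos (norm_pos_iff.mpr hnonaffine) hε0)] at hmem
      exact hmem
    nlinarith [norm_nonneg a, norm_nonneg c]
  -- Step 2
  have hne1d : (1:ℂ) + d ≠ 0 := by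
    intro h
    have : d = -1 := by linear_combination h
    rw [this] at habs_d
    simp at habs_d
  have hfix' : A + B = 1 + d := by
    have h1 := hfix
    rw [hφ 1] at h1
    have h2 := (div_eq_one_iff_eq hne1d).mp h1
    linear_combination h2
  -- Step 3/4: key half-plane property
  set Q : ℂ := (A - 1) / (1 + d) with hQ
  have hkey : ∀ u : ℂ, 0 < u.re → 0 ≤ (Q * u).re := by
    intro u hu
    have hu0 : Complex.normSq u ≠ 0 := by
      intro h
      have := Complex.normSq_eq_zero.mp h
      rw [this] at hu; simp at hu
    have hnsu : 0 < Complex.normSq u := lt_of_le_of_ne (Complex.normSq_nonneg u) (Ne.symm hu0)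
    set w₀ : ℂ := (A - 1) * u with hw₀
    set K : ℝ := 2 * (((1 + d) * (starRingEnd ℂ) w₀).re) with hK
    set C : ℝ := 2 * ((u * (starRingEnd ℂ) w₀).re) + Complex.normSq w₀ with hC
    have hKnn : 0 ≤ K := by
      apply aux_eps (2 * u.re / Complex.normSq u) K C (by positivity)
      intro ε hε1 hε2
      set z : ℂ := 1 - (ε : ℂ) * u with hz
      have hns : Complex.normSq z = 1 - ε * (2 * u.re) + ε ^ 2 * Complex.normSq u := by
        rw [hz, Complex.normSq_sub]
        simp [Complex.normSq_mul, Complex.normSq_ofReal, map_mul, Complex.conj_ofReal,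
          Complex.mul_re, Complex.conj_re, Complex.conj_im, Complex.ofReal_re, Complex.ofReal_im]
        ring
      have hzball : z ∈ ball (0 : ℂ) 1 := by
        rw [mem_ball, dist_zero_right]
        have hns1 : Complex.normSq z < 1 := by
          rw [hns]
          have : ε * Complex.normSq u < 2 * u.re := by
            exact (lt_div_iff₀ hnsu).mp hε2
          nlinarith
        nlinarith [Complex.sq_norm z, norm_nonneg z]
      have hmem := hmaps hzball
      rw [mem_ball, dist_zero_right, hφ z] at hmem
      have hzd : z + d ≠ 0 := by
        intro h
        have hdz : d = -z := by linear_combination h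
        rw [hdz, norm_neg] at habs_d
        have : ‖z‖ < 1 := by
          rw [mem_ball, dist_zero_right] at hzball
          exact hzball
        linarith
      have hzd0 : 0 < ‖z + d‖ := norm_pos_iff.mpr hzd
      rw [norm_div, div_lt_one hzd0] at hmem
      have hid : A * z + B = (z + d) - w₀ * (ε : ℂ) := by
        rw [hw₀, hz]
        linear_combination hfix'
      rw [hid] at hmem
      have hnslt : Complex.normSq ((z + d) - w₀ * (ε:ℂ)) < Complex.normSq (z + d) := by
        rw [← Complex.sq_norm, ← Complex.sq_norm]
        exact pow_lt_pow_left₀ hmem (norm_nonneg _) (by norm_num)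
      rw [Complex.normSq_sub] at hnslt
      have hzd_eq : z + d = (1 + d) - (ε:ℂ) * u := by rw [hz]; ring
      have hre_eq : ((z + d) * (starRingEnd ℂ) (w₀ * (ε:ℂ))).re
          = ε * ((1 + d) * (starRingEnd ℂ) w₀).re - ε^2 * (u * (starRingEnd ℂ) w₀).re := by
        rw [hzd_eq]
        simp [map_mul, Complex.conj_ofReal, Complex.mul_re, Complex.mul_im,
          Complex.sub_re, Complex.sub_im, Complex.ofReal_re, Complex.ofReal_im]
        ring
      have hnsw : Complex.normSq (w₀ * (ε:ℂ)) = ε^2 * Complex.normSq w₀ := by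
        rw [Complex.normSq_mul, Complex.normSq_ofReal]; ring
      rw [hre_eq, hnsw] at hnslt
      -- hnslt : nsq(z+d) + ε²nsq(w₀) - 2(ε K/2 - ε² R) < nsq(z+d)
      by_contra hcon
      push_neg at hcon
      nlinarith
    -- convert to (Q*u).re ≥ 0
    have h5 : Q * u = w₀ / (1 + d) := by rw [hQ, hw₀]; ring
    rw [h5, Complex.div_re, ← add_div]
    apply div_nonneg ?_ (Complex.normSq_nonneg _)
    have h6 : ((1 + d) * (starRingEnd ℂ) w₀).re
        = w₀.re * (1 + d).re + w₀.im * (1 + d).im := by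
      simp [Complex.mul_re, Complex.conj_re, Complex.conj_im]
      ring
    rw [hK, h6] at hKnn
    linarith
  -- Step 5
  have hre : 0 ≤ Q.re := by
    have := hkey 1 (by norm_num)
    simpa using this
  have him : Q.im = 0 := by
    have h1 : Q.im ≤ 0 := by
      apply aux_pos_le Q.im Q.re
      intro t ht
      have := hkey ((t:ℂ) + Complex.I) (by simp [ht])
      rw [Complex.mul_re] at this
      simp at this
      linarith
    have h2 : -Q.im ≤ 0 := by
      apply aux_pos_le (-Q.im) Q.re
      intro t ht
      have := hkey ((t:ℂ) - Complex.I) (by simp [ht])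
      rw [Complex.mul_re] at this
      simp at this
      linarith
    linarith
  set q : ℝ := Q.re with hq
  have hQq : Q = (q : ℂ) := Complex.ext (by simp [hq]) (by simp [him])
  have hA1 : A - 1 ≠ 0 := by
    intro h
    apply hdet
    have hABd : B = d := by linear_combination hfix' - h
    rw [← hca, ← hcb, ← hcd]
    linear_combination c^2*d*h - c^2*hABd
  have hQ0 : Q ≠ 0 := div_ne_zero hA1 hne1d
  have hq0 : 0 < q := by
    rcases lt_or_eq_of_le hre with h | h
    · exact h
    · exfalso; apply hQ0; rw [hQq, ← h]; simp
  -- Step 6: derivative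
  have hden1 : c * 1 + d₀ ≠ 0 := by
    rw [show c * 1 + d₀ = c * (1 + d) by rw [← hcd]; ring]
    exact mul_ne_zero hnonaffine hne1d
  have hderiv : deriv φ 1 = Q := by
    have h1 : HasDerivAt (fun z : ℂ => a * z + b) a 1 := by
      simpa using ((hasDerivAt_id (1:ℂ)).const_mul a).add_const b
    have h2 : HasDerivAt (fun z : ℂ => c * z + d₀) c 1 := by
      simpa using ((hasDerivAt_id (1:ℂ)).const_mul c).add_const d₀
    have h3 := h1.div h2 hden1
    rw [hlf]
    rw [show deriv (fun z => (a * z + b) / (c * z + d₀)) 1 = _ from h3.deriv]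
    have hab : a + b = c + d₀ := by
      have h4 := hfix
      rw [hlf] at h4
      simp only at h4
      have h5 := (div_eq_one_iff_eq hden1).mp h4
      linear_combination h5
    have hX : a * (c*1+d₀) - (a*1+b)*c = (c^2*(1+d)) * (A - 1) := by
      rw [← hca, ← hcb, ← hcd]
      linear_combination (-(c^2)) * hfix'
    have hden2 : c*1 + d₀ = c*(1+d) := by rw [← hcd]; ring
    rw [hQ, hX, hden2, mul_pow,
      show (c:ℂ)^2*(1+d)^2 = (c^2*(1+d)) * (1+d) by ring]
    exact mul_div_mul_left _ _ (mul_ne_zero (pow_ne_zero 2 hnonaffine) hne1d)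
  refine ⟨q, d, hq0, by rw [hderiv, hQq], habs_d, ?_⟩
  intro z
  rw [hφ z]
  have hAf : A = 1 + (q:ℂ) + (q:ℂ) * d := by
    have h1 : Q * (1 + d) = A - 1 := div_mul_cancel₀ _ hne1d
    rw [hQq] at h1
    linear_combination -h1
  have hBf : B = d - (q:ℂ) - (q:ℂ) * d := by
    have h1 : Q * (1 + d) = A - 1 := div_mul_cancel₀ _ hne1d
    rw [hQq] at h1
    linear_combination hfix' + h1
  rw [hAf, hBf]
end

section
/- Let φ(z) = ((1+q+qd)z + (d-q-qd))/(z+d) with q > 0 and |d| > 1, and let T(z) = (1+z)/(1-z). Then φ maps the unit disk into itself if and only if Re((d-1)/(d+1)) ≥ q. -/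
open Metric

/-- Let `φ(z) = ((1+q+qd)z + (d-q-qd))/(z+d)` with `q > 0` and `|d| > 1`.
Then `φ` maps the unit disk into itself iff `Re((d-1)/(d+1)) ≥ q`. -/
theorem selfmap_iff_re_condition (q : ℝ) (d : ℂ) (hq : 0 < q) (hd : 1 < ‖d‖)
    (φ : ℂ → ℂ)
    (hφ : φ = fun z => (((1 : ℂ) + q + q * d) * z + (d - q - q * d)) / (z + d)) :
    Set.MapsTo φ (ball (0 : ℂ) 1) (ball (0 : ℂ) 1) ↔ q ≤ ((d - 1) / (d + 1)).re := by
  have hd1 : d + 1 ≠ 0 := by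
    intro h
    have : d = -1 := by linear_combination h
    rw [this] at hd; simp at hd
  set t : ℝ := Complex.normSq (d + 1) with ht
  have htpos : 0 < t := Complex.normSq_pos.mpr hd1
  set P : ℝ := ((d - 1) * (starRingEnd ℂ) (d + 1)).re - q * t with hP
  -- reformulate the RHS condition
  have hcond : (q ≤ ((d - 1) / (d + 1)).re) ↔ 0 ≤ P := by
    have hconj : (starRingEnd ℂ) (d + 1) ≠ 0 := by
      intro h
      apply hd1
      have := congrArg (starRingEnd ℂ) h
      simpa using this
    have h1 : (d - 1) / (d + 1) = ((d - 1) * (starRingEnd ℂ) (d + 1)) / ((t : ℝ) : ℂ) := by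
      rw [ht, ← Complex.mul_conj, mul_div_mul_right _ _ hconj]
    rw [h1, Complex.div_ofReal_re, le_div_iff₀ htpos, hP]
    constructor <;> intro h <;> linarith
  -- the key algebraic identity
  have key : ∀ z : ℂ, Complex.normSq (z + d)
      - Complex.normSq (((1 : ℂ) + q + q * d) * z + (d - q - q * d))
      = q * ((1 - Complex.normSq z) * t + P * Complex.normSq (1 - z)) := by
    intro z
    rw [hP, ht]
    simp only [Complex.normSq_apply, Complex.add_re, Complex.add_im, Complex.mul_re,
      Complex.mul_im, Complex.sub_re, Complex.sub_im, Complex.one_re, Complex.one_im,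
      Complex.ofReal_re, Complex.ofReal_im, Complex.conj_re, Complex.conj_im]
    ring
  -- nonvanishing of the denominator on the closed disk
  have hden : ∀ z : ℂ, ‖z‖ < 1 → 0 < ‖z + d‖ := by
    intro z hz
    have h1 : ‖d‖ - ‖-z‖ ≤ ‖d - (-z)‖ := norm_sub_norm_le _ _
    have h2 : d - (-z) = z + d := by ring
    rw [h2, norm_neg] at h1
    linarith
  rw [hcond]
  constructor
  · -- forward: contrapositive
    intro hmaps
    by_contra hPneg
    push_neg at hPneg
    -- choose z = -r with r ∈ (r₀, 1), r₀ = (t+P)/(t-P)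
    set r : ℝ := (max ((t + P) / (t - P)) 0 + 1) / 2 with hr
    have htP : 0 < t - P := by linarith
    have hr0lt1 : (t + P) / (t - P) < 1 := by
      rw [div_lt_one htP]; linarith
    have hm : max ((t + P) / (t - P)) 0 < 1 := by
      apply max_lt hr0lt1; norm_num
    have hrlt1 : r < 1 := by rw [hr]; linarith
    have hrpos : 0 ≤ r := by
      have : (0:ℝ) ≤ max ((t + P) / (t - P)) 0 := le_max_right _ _
      rw [hr]; linarith
    have hrgt : (t + P) / (t - P) < r := by
      have h2 : (t + P) / (t - P) ≤ max ((t + P) / (t - P)) 0 := le_max_left _ _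
      rw [hr]; linarith
    have hineq : r * (t - P) > t + P := by
      have := (div_lt_iff₀ htP).mp hrgt
      linarith
    set z : ℂ := ((-r : ℝ) : ℂ) with hz
    have habsz : ‖z‖ < 1 := by
      rw [hz, Complex.norm_real, Real.norm_eq_abs, abs_neg, abs_of_nonneg hrpos]; exact hrlt1
    have hzball : z ∈ ball (0 : ℂ) 1 := by
      rw [mem_ball_zero_iff]; exact habsz
    have hφz := hmaps hzball
    rw [mem_ball_zero_iff, hφ] at hφz
    simp only at hφz
    have hdenz := hden z habsz
    have hdenz' : z + d ≠ 0 := by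
      intro h; rw [h] at hdenz; simp at hdenz
    rw [norm_div, div_lt_one hdenz] at hφz
    have habs2 : Complex.normSq (((1 : ℂ) + q + q * d) * z + (d - q - q * d))
        < Complex.normSq (z + d) := by
      rw [← Complex.sq_norm, ← Complex.sq_norm]
      have h1 := norm_nonneg (((1 : ℂ) + q + q * d) * z + (d - q - q * d))
      nlinarith
    -- but the identity shows the opposite
    have hk := key z
    have hns1 : Complex.normSq z = r ^ 2 := by
      rw [hz, Complex.normSq_ofReal]; ring
    have hns2 : Complex.normSq (1 - z) = (1 + r) ^ 2 := by
      rw [hz]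
      have : (1 : ℂ) - ((-r : ℝ) : ℂ) = ((1 + r : ℝ) : ℂ) := by push_cast; ring
      rw [this, Complex.normSq_ofReal]; ring
    rw [hns1, hns2] at hk
    have hneg : (1 - r ^ 2) * t + P * (1 + r) ^ 2 < 0 := by nlinarith
    nlinarith
  · -- backward
    intro hPpos z hzball
    rw [mem_ball_zero_iff] at hzball
    rw [mem_ball_zero_iff, hφ]
    simp only
    have hdenz := hden z hzball
    have hdenz' : z + d ≠ 0 := by
      intro h; rw [h] at hdenz; simp at hdenz
    rw [norm_div, div_lt_one hdenz]
    have hk := key z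
    have hnsz : Complex.normSq z < 1 := by
      rw [← Complex.sq_norm]
      have h0 := norm_nonneg z
      nlinarith
    have hpos : 0 < Complex.normSq (z + d)
        - Complex.normSq (((1 : ℂ) + q + q * d) * z + (d - q - q * d)) := by
      rw [hk]
      have h1 : 0 ≤ Complex.normSq (1 - z) := Complex.normSq_nonneg _
      have h3 : 0 < (1 - Complex.normSq z) * t := by nlinarith
      have h4 : 0 ≤ P * Complex.normSq (1 - z) := mul_nonneg hPpos h1
      exact mul_pos hq (by linarith)
    rw [← Complex.sq_norm, ← Complex.sq_norm] at hpos
    have h2 := norm_nonneg (((1 : ℂ) + q + q * d) * z + (d - q - q * d))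
    nlinarith
end

section
/- Let φ(z) = (az+b)/(cz+d) be a linear fractional self-map of 𝔻, with associated maps σ(z) = (āz - c̄)/(-b̄z + d̄) and τ = φ ∘ σ. If φ(z) = ((1+q+qd)z + (d-q-qd))/(z+d) with q = φ'(1) > 0 and |d| > 1, then τ(z) = ((1-b)z + b)/(-bz + 1 + b), where b = (|d|² - q|1+d|² - 1)/(q|1+d|²). -/
open Complex

/-- For `φ(z) = ((1+q+qd)z + (d-q-qd))/(z+d)` with `q = φ'(1) > 0` and `|d| > 1`,
writing `φ(z) = (az+b₀)/(cz+d)` with `a = 1+q+qd`, `b₀ = d-q-qd`, `c = 1`, and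
`σ(z) = (āz - c̄)/(-b̄₀z + d̄)`, `τ = φ ∘ σ`, one has
`τ(z) = ((1-b)z + b)/(-bz + 1 + b)` where `b = (|d|² - q|1+d|² - 1)/(q|1+d|²)`. -/
theorem tau_representation (q : ℝ) (d : ℂ) (hq : 0 < q) (hd : 1 < ‖d‖)
    (a b₀ c : ℂ) (ha : a = 1 + q + q * d) (hb₀ : b₀ = d - q - q * d) (hc : c = 1)
    (φ σ τ : ℂ → ℂ)
    (hφ : φ = fun z => (a * z + b₀) / (z + d))
    (hσ : σ = fun z => ((starRingEnd ℂ) a * z - (starRingEnd ℂ) c) /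
      (-(starRingEnd ℂ) b₀ * z + (starRingEnd ℂ) d))
    (hτ : τ = φ ∘ σ)
    (hmaps : Set.MapsTo φ (Metric.ball (0 : ℂ) 1) (Metric.ball (0 : ℂ) 1))
    (b : ℝ)
    (hb : b = (‖d‖ ^ 2 - q * ‖1 + d‖ ^ 2 - 1) /
      (q * ‖1 + d‖ ^ 2)) :
    ∀ z : ℂ, -(starRingEnd ℂ) b₀ * z + (starRingEnd ℂ) d ≠ 0 → σ z + d ≠ 0 →
      τ z = ((1 - (b : ℂ)) * z + b) / (-(b : ℂ) * z + 1 + b) := by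
  intro z h1 h2
  have hqC : (q : ℂ) ≠ 0 := by exact_mod_cast hq.ne'
  have hd1 : d ≠ -1 := by
    intro h
    rw [h] at hd
    simp at hd
  have hs : (1 : ℂ) + d ≠ 0 := by
    intro h
    apply hd1
    linear_combination h
  have hsE : (1 : ℂ) + (starRingEnd ℂ) d ≠ 0 := by
    intro h
    apply hs
    have := congrArg (starRingEnd ℂ) h
    simpa using this
  have hQ : (q : ℂ) * (1 + d) * (1 + (starRingEnd ℂ) d) ≠ 0 :=
    mul_ne_zero (mul_ne_zero hqC hs) hsE
  have hnsne : Complex.normSq (1 + d) ≠ 0 := by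
    simpa [Complex.normSq_eq_zero] using hs
  have habs1 : ‖1 + d‖ ^ 2 = Complex.normSq (1 + d) := Complex.sq_norm _
  have habsd : ‖d‖ ^ 2 = Complex.normSq d := Complex.sq_norm _
  have hbR : b * (q * Complex.normSq (1 + d)) =
      Complex.normSq d - q * Complex.normSq (1 + d) - 1 := by
    rw [hb, habs1, habsd, div_mul_cancel₀ _ (mul_ne_zero hq.ne' hnsne)]
  have hnormd : ((Complex.normSq d : ℝ) : ℂ) = d * (starRingEnd ℂ) d := (Complex.mul_conj d).symm
  have hnorms : ((Complex.normSq (1 + d) : ℝ) : ℂ) = (1 + d) * (1 + (starRingEnd ℂ) d) := by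
    rw [← Complex.mul_conj]
    simp
  have hB : (b : ℂ) * ((q : ℂ) * (1 + d) * (1 + (starRingEnd ℂ) d)) =
      d * (starRingEnd ℂ) d - (q : ℂ) * (1 + d) * (1 + (starRingEnd ℂ) d) - 1 := by
    have := congrArg (fun x : ℝ => (x : ℂ)) hbR
    push_cast at this
    rw [hnormd, hnorms] at this
    linear_combination this
  have hca : (starRingEnd ℂ) a = 1 + q + q * (starRingEnd ℂ) d := by
    simp [ha, map_add, map_mul, Complex.conj_ofReal]
  have hcb : (starRingEnd ℂ) b₀ = (starRingEnd ℂ) d - q - q * (starRingEnd ℂ) d := by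
    simp [hb₀, map_sub, map_mul, Complex.conj_ofReal]
  have hcc : (starRingEnd ℂ) c = 1 := by simp [hc]
  set N : ℂ := (starRingEnd ℂ) a * z - (starRingEnd ℂ) c with hN
  set M : ℂ := -(starRingEnd ℂ) b₀ * z + (starRingEnd ℂ) d with hM
  have hσz : σ z = N / M := by rw [hσ]
  have hτz : τ z = (a * (N / M) + b₀) / (N / M + d) := by
    rw [hτ, Function.comp_apply, hσz, hφ]
  have id1 : N + d * M =
      ((q : ℂ) * (1 + d) * (1 + (starRingEnd ℂ) d)) * (-(b : ℂ) * z + 1 + (b : ℂ)) := by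
    rw [hN, hM, hca, hcb, hcc]
    linear_combination (z - 1) * hB
  have id2 : a * N + b₀ * M =
      ((q : ℂ) * (1 + d) * (1 + (starRingEnd ℂ) d)) * ((1 - (b : ℂ)) * z + (b : ℂ)) := by
    rw [hN, hM, hca, hcb, hcc, ha, hb₀]
    linear_combination (z - 1) * hB
  have hNdM : N + d * M ≠ 0 := by
    intro h
    apply h2
    rw [hσz]
    field_simp
    linear_combination h
  have step : τ z = (a * N + b₀ * M) / (N + d * M) := by
    rw [hτz]
    field_simp
  rw [step, id1, id2, mul_div_mul_left _ _ hQ]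
end

section
/- Let b ≥ 0, q > 0, |d| > 1 with b = (|d|² - q|1+d|² - 1)/(q|1+d|²) > 0, τ^[k](z) = ((1-kb)z + kb)/(-kbz + 1 + kb), and φ(0) = (d - q - qd)/d. Then for every natural number k, τ^[k](φ(0)) = 1 - q(1+d)/(d + qb(1+d)k). -/
/-- With `q > 0`, `|d| > 1`, `b = (|d|² - q|1+d|² - 1)/(q|1+d|²) > 0`,
`τ^[k](z) = ((1-kb)z + kb)/(-kbz + 1 + kb)` and `φ(0) = (d-q-qd)/d`, one has
`τ^[k](φ(0)) = 1 - q(1+d)/(d + qb(1+d)k)` (wherever the denominators are nonzero). -/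
theorem tau_iterates_at_phi_zero (q b : ℝ) (d : ℂ)
    (hq : 0 < q) (hd : 1 < ‖d‖)
    (hb : b = (‖d‖ ^ 2 - q * ‖1 + d‖ ^ 2 - 1) /
      (q * ‖1 + d‖ ^ 2))
    (hbpos : 0 < b)
    (w : ℂ) (hw : w = (d - q - q * d) / d) :
    ∀ k : ℕ,
      -((k : ℂ) * b) * w + 1 + (k : ℂ) * b ≠ 0 →
      d + q * b * (1 + d) * k ≠ 0 →
      ((1 - (k : ℂ) * b) * w + (k : ℂ) * b) / (-((k : ℂ) * b) * w + 1 + (k : ℂ) * b) =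
        1 - q * (1 + d) / (d + q * b * (1 + d) * k) := by
  intro k h1 h2
  have hd0 : d ≠ 0 := by
    intro h
    simp [h] at hd
    linarith
  subst hw
  field_simp at h1 ⊢
  field_simp
  ring_nf
  have hD : d + d * (q:ℂ) * k * b + q * k * b ≠ 0 := by
    intro h; apply h2; linear_combination h
  linear_combination mul_inv_cancel₀ hD
end

section
/- Let α ∈ ℝ with -1 < α < 0, β > 0, δ > 0 with δ = α + β and δ not a nonpositive integer. Then the function F(x) = ₂F₁(α,β;δ;x) = ∑_{k≥0} ((α)ₖ(β)ₖ)/((δ)ₖ k!) xᵏ, which satisfies F(0) = 1 and F(x) → -∞ as x → 1⁻, has a root in the open interval (0,1). -/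
open Filter

/-- The real Pochhammer symbol `(a)ₖ`. -/
def pochR (a : ℝ) : ℕ → ℝ
  | 0 => 1
  | k + 1 => pochR a k * (a + k)

lemma pochR_pos {a : ℝ} (ha : 0 < a) : ∀ k, 0 < pochR a k
  | 0 => one_pos
  | k + 1 => mul_pos (pochR_pos ha k) (by positivity)
lemma pochR_neg {a : ℝ} (h1 : -1 < a) (h2 : a < 0) : ∀ k, 1 ≤ k → pochR a k < 0
  | 1, _ => by simp [pochR, h2]
  | k + 2, _ => by
    have h := pochR_neg h1 h2 (k+1) (by omega)
    have : (0:ℝ) < a + (k+1) := by push_cast; linarith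
    calc pochR a (k+2) = pochR a (k+1) * (a + (k+1)) := by simp [pochR]
    _ < 0 := mul_neg_of_neg_of_pos h this
noncomputable def cc (α β δ : ℝ) (k : ℕ) : ℝ :=
  pochR α k * pochR β k / (pochR δ k * (Nat.factorial k : ℝ))
lemma cc_zero (α β δ : ℝ) : cc α β δ 0 = 1 := by simp [cc, pochR]
lemma cc_succ {α β δ : ℝ} (hδ : 0 < δ) (k : ℕ) :
    cc α β δ (k+1) = cc α β δ k * ((α+k)*(β+k)/((δ+k)*(k+1))) := by
  have h1 : (0:ℝ) < pochR δ k := pochR_pos hδ k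
  have h2 : (0:ℝ) < (Nat.factorial k : ℝ) := by positivity
  have h3 : (0:ℝ) < δ + k := by positivity
  have h4 : (0:ℝ) < (k:ℝ) + 1 := by positivity
  simp only [cc, pochR, Nat.factorial_succ]
  push_cast
  field_simp
section main
variable {α β δ : ℝ} (hα₁ : -1 < α) (hα₂ : α < 0) (hβ : 0 < β) (hδ : 0 < δ)
include hα₁ hα₂ hβ hδ in
lemma cc_neg (k : ℕ) (hk : 1 ≤ k) : cc α β δ k < 0 := by
  have h1 := pochR_neg hα₁ hα₂ k hk
  have h2 := pochR_pos hβ k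
  have h3 := pochR_pos hδ k
  have h4 : (0:ℝ) < (Nat.factorial k : ℝ) := by positivity
  exact div_neg_of_neg_of_pos (mul_neg_of_neg_of_pos h1 h2) (by positivity)

include hα₁ hα₂ hβ hδ in
lemma cc_abs_antitone (hsum : δ = α + β) (k : ℕ) (hk : 1 ≤ k) :
    -cc α β δ (k+1) ≤ -cc α β δ k := by
  have hαβ : α * β < 0 := mul_neg_of_neg_of_pos hα₂ hβ
  have hneg := cc_neg hα₁ hα₂ hβ hδ k hk
  have hαk : (0:ℝ) ≤ α + k := by
    have : (1:ℝ) ≤ (k:ℝ) := by exact_mod_cast hk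
    linarith
  have hβk : (0:ℝ) < β + k := by positivity
  have hδk : (0:ℝ) < δ + k := by positivity
  have hk1 : (0:ℝ) < (k:ℝ) + 1 := by positivity
  rw [cc_succ hδ]
  have hrat : (α+k)*(β+k)/((δ+k)*((k:ℝ)+1)) ≤ 1 := by
    rw [div_le_one (by positivity)]
    nlinarith [hsum]
  have hrat0 : 0 ≤ (α+k)*(β+k)/((δ+k)*((k:ℝ)+1)) := by positivity
  nlinarith

include hα₁ hα₂ hβ hδ in
lemma cc_abs_le (hsum : δ = α + β) (k : ℕ) : |cc α β δ k| ≤ max 1 (-cc α β δ 1) := by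
  match k with
  | 0 => simp [cc_zero]
  | k + 1 =>
    have h : ∀ j, 1 ≤ j → -cc α β δ j ≤ -cc α β δ 1 := by
      intro j hj
      induction j with
      | zero => omega
      | succ n ih =>
        rcases Nat.eq_or_lt_of_le hj with h | h
        · simp [← h]
        · exact le_trans (cc_abs_antitone hα₁ hα₂ hβ hδ hsum n (by omega)) (ih (by omega))
    have := h (k+1) (by omega)
    have hneg := cc_neg hα₁ hα₂ hβ hδ (k+1) (by omega)
    rw [abs_of_neg hneg]
    exact le_max_of_le_right this

include hα₁ hα₂ hβ hδ in
lemma dd_mono (hsum : δ = α + β) (k : ℕ) (hk : 1 ≤ k) :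
    (-cc α β δ k) * ((k:ℝ) + (α*β - 1)) ≤
      (-cc α β δ (k+1)) * (((k:ℕ)+1:ℝ) + (α*β - 1)) := by
  have hneg := cc_neg hα₁ hα₂ hβ hδ k hk
  have hc : 0 < -cc α β δ k := by linarith
  have hαβ : α * β < 0 := mul_neg_of_neg_of_pos hα₂ hβ
  have hαk : (0:ℝ) ≤ α + k := by
    have : (1:ℝ) ≤ (k:ℝ) := by exact_mod_cast hk
    linarith
  have hβk : (0:ℝ) < β + k := by positivity
  have hB : (0:ℝ) < (δ+k)*((k:ℝ)+1) := by positivity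
  rw [cc_succ hδ]
  have hA : (α+(k:ℝ))*(β+k) = (k:ℝ)^2 + δ*k + α*β := by rw [hsum]; ring
  have key : ((k:ℝ) + (α*β-1)) * ((δ+k)*((k:ℝ)+1)) ≤
      (α+k)*(β+k) * (((k:ℝ)+1) + (α*β-1)) := by
    nlinarith [sq_nonneg (α*β), mul_pos (neg_pos.2 hαβ) hδ, hA, Nat.cast_nonneg (α := ℝ) k]
  have : ((k:ℝ) + (α*β-1)) ≤ (α+k)*(β+k)/((δ+k)*((k:ℝ)+1)) * (((k:ℝ)+1) + (α*β-1)) := by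
    rw [div_mul_eq_mul_div, le_div_iff₀ hB]
    linarith [key]
  calc (-cc α β δ k) * ((k:ℝ) + (α*β - 1))
      ≤ (-cc α β δ k) * ((α+k)*(β+k)/((δ+k)*((k:ℝ)+1)) * (((k:ℝ)+1) + (α*β-1))) :=
        mul_le_mul_of_nonneg_left this (le_of_lt hc)
    _ = -(cc α β δ k * ((α+k)*(β+k)/((δ+k)*((k:ℝ)+1)))) * (((k:ℕ)+1:ℝ) + (α*β-1)) := by
        push_cast; ring

include hα₁ hα₂ hβ hδ in
lemma cc_lower (hsum : δ = α + β) :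
    ∃ (ε : ℝ) (N : ℕ), 0 < ε ∧ 1 ≤ N ∧ ∀ k, N ≤ k → ε / k ≤ -cc α β δ k := by
  have hαβ : α * β < 0 := mul_neg_of_neg_of_pos hα₂ hβ
  set t : ℝ := α * β - 1 with ht
  obtain ⟨N, hN⟩ := exists_nat_gt (1 - t)
  have hN1 : 1 ≤ N := by
    by_contra h
    push_neg at h
    interval_cases N
    simp at hN; linarith
  set ε : ℝ := (-cc α β δ N) * ((N:ℝ) + t) with hε
  have hNt : (1:ℝ) ≤ (N:ℝ) + t := by linarith
  have hccN := cc_neg hα₁ hα₂ hβ hδ N hN1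
  have hεpos : 0 < ε := mul_pos (by linarith) (by linarith)
  refine ⟨ε, N, hεpos, hN1, ?_⟩
  intro k hk
  have hkt : (1:ℝ) ≤ (k:ℝ) + t := by
    have : (N:ℝ) ≤ k := by exact_mod_cast hk
    linarith
  have hkpos : (0:ℝ) < k := by
    have : (1:ℕ) ≤ k := le_trans hN1 hk
    exact_mod_cast Nat.lt_of_lt_of_le Nat.zero_lt_one this
  -- d_k ≥ ε by induction on k ≥ N
  have hd : ∀ k, N ≤ k → ε ≤ (-cc α β δ k) * ((k:ℝ) + t) := by
    intro k hk
    induction k with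
    | zero => omega
    | succ n ih =>
      rcases Nat.eq_or_lt_of_le hk with h | h
      · rw [← h]
      · have hn : N ≤ n := by omega
        have hm := dd_mono hα₁ hα₂ hβ hδ hsum n (le_trans hN1 hn)
        have hcast : ((n:ℝ) + 1) = ((n+1 : ℕ) : ℝ) := by push_cast; ring
        rw [hcast] at hm
        exact le_trans (ih hn) hm
  have hdk := hd k hk
  have hcck := cc_neg hα₁ hα₂ hβ hδ k (le_trans hN1 hk)
  rw [div_le_iff₀ hkpos]
  have hle : ((k:ℝ) + t) ≤ (k:ℝ) := by linarith
  calc ε ≤ (-cc α β δ k) * ((k:ℝ) + t) := hdk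
    _ ≤ (-cc α β δ k) * (k:ℝ) := mul_le_mul_of_nonneg_left hle (by linarith)

include hα₁ hα₂ hβ hδ in
lemma sum_cc_tendsto (hsum : δ = α + β) :
    Tendsto (fun M => ∑ k ∈ Finset.range M, (-cc α β δ (k+1))) atTop atTop := by
  obtain ⟨ε, N, hε, hN1, hlow⟩ := cc_lower hα₁ hα₂ hβ hδ hsum
  set g : ℕ → ℝ := fun k => ε * (1 / ((k:ℝ)+1)) with hg
  have hgt : Tendsto (fun M => ∑ k ∈ Finset.range M, g k) atTop atTop := by
    simp only [hg, ← Finset.mul_sum]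
    exact Tendsto.const_mul_atTop hε Real.tendsto_sum_range_one_div_nat_succ_atTop
  set C : ℝ := ∑ k ∈ Finset.range N, ((-cc α β δ (k+1)) - g k) with hC
  have hfg : ∀ k, N ≤ k → 0 ≤ (-cc α β δ (k+1)) - g k := by
    intro k hk
    have := hlow (k+1) (by omega)
    have h1 : ((k:ℝ)+1) > 0 := by positivity
    have : ε / ((k:ℕ)+1:ℝ) ≤ -cc α β δ (k+1) := by exact_mod_cast this
    simp only [hg]
    rw [mul_one_div]
    linarith
  refine tendsto_atTop_mono' atTop
      (f₁ := fun M => (∑ k ∈ Finset.range M, g k) + C) ?_ (hgt.atTop_add tendsto_const_nhds)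
  · filter_upwards [eventually_ge_atTop N] with M hM
    have hsub : ∑ k ∈ Finset.range N, ((-cc α β δ (k+1)) - g k)
        ≤ ∑ k ∈ Finset.range M, ((-cc α β δ (k+1)) - g k) := by
      apply Finset.sum_le_sum_of_subset_of_nonneg
      · exact Finset.range_subset_range.2 hM
      · intro k hk hk'
        exact hfg k (by simpa using hk')
    simp only [Finset.sum_sub_distrib] at hsub
    simp only [hC, Finset.sum_sub_distrib]
    linarith
end main


/-- For `-1 < α < 0`, `β > 0`, `δ > 0` with `δ = α + β` (and `δ` not a nonpositive
integer), the function `F(x) = ₂F₁(α,β;δ;x)` satisfies `F(0) = 1`, tends to `-∞` as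
`x → 1⁻`, and has a root in `(0,1)`. -/
theorem hypergeometric_root_in_unit_interval (α β δ : ℝ)
    (hα₁ : -1 < α) (hα₂ : α < 0) (hβ : 0 < β) (hδ : 0 < δ)
    (hsum : δ = α + β) (hδint : ∀ n : ℕ, δ ≠ -(n : ℝ))
    (F : ℝ → ℝ)
    (hF : F = fun x => ∑' k : ℕ,
      pochR α k * pochR β k / (pochR δ k * (Nat.factorial k : ℝ)) * x ^ k) :
    F 0 = 1 ∧
    Tendsto F (nhdsWithin 1 (Set.Iio 1)) atBot ∧
    ∃ x ∈ Set.Ioo (0 : ℝ) 1, F x = 0 := by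
  have hFcc : F = fun x => ∑' k : ℕ, cc α β δ k * x ^ k := hF
  set C₀ : ℝ := max 1 (-cc α β δ 1) with hC₀
  have hC₀1 : (1:ℝ) ≤ C₀ := le_max_left _ _
  have habs : ∀ k, |cc α β δ k| ≤ C₀ := cc_abs_le hα₁ hα₂ hβ hδ hsum
  -- summability
  have hsummable : ∀ x : ℝ, |x| < 1 → Summable (fun k => cc α β δ k * x ^ k) := by
    intro x hx
    refine Summable.of_abs (Summable.of_nonneg_of_le (fun k => abs_nonneg _)
      (fun k => ?_) ((summable_geometric_of_lt_one (abs_nonneg x) hx).mul_left C₀))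
    rw [abs_mul, abs_pow]
    exact mul_le_mul_of_nonneg_right (habs k) (by positivity)
  -- F as 1 minus a positive tail
  have hFx : ∀ x : ℝ, |x| < 1 →
      F x = 1 - ∑' k : ℕ, (-cc α β δ (k+1)) * x ^ (k+1) := by
    intro x hx
    simp only [hFcc]
    rw [(hsummable x hx).tsum_eq_zero_add]
    simp only [cc_zero, pow_zero, one_mul, neg_mul]
    rw [tsum_neg]
    ring
  have htail_summable : ∀ x : ℝ, |x| < 1 →
      Summable (fun k => (-cc α β δ (k+1)) * x ^ (k+1)) := by
    intro x hx
    have := ((summable_nat_add_iff 1).2 (hsummable x hx)).neg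
    simpa [neg_mul] using this
  -- Part 1
  have h1 : F 0 = 1 := by
    simp only [hFcc]
    rw [tsum_eq_single 0 (fun k hk => by simp [zero_pow hk])]
    simp [cc_zero]
  have h2 : Tendsto F (nhdsWithin 1 (Set.Iio 1)) atBot := by
    rw [tendsto_atBot]
    intro b
    have hdiv := sum_cc_tendsto hα₁ hα₂ hβ hδ hsum
    obtain ⟨M, hM⟩ := (hdiv.eventually_ge_atTop (2 - b)).exists
    set Q : ℝ → ℝ := fun x => ∑ k ∈ Finset.range M, (-cc α β δ (k+1)) * x ^ (k+1) with hQdef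
    have hQcont : Continuous Q := by
      apply continuous_finset_sum
      intro k _
      continuity
    have hQ1 : 1 - b < Q 1 := by
      have : Q 1 = ∑ k ∈ Finset.range M, (-cc α β δ (k+1)) := by simp [hQdef]
      rw [this]; linarith
    have hQev : ∀ᶠ x in nhds (1:ℝ), Q x ∈ Set.Ioi (1 - b) :=
      hQcont.continuousAt.eventually_mem (Ioi_mem_nhds hQ1)
    filter_upwards [hQev.filter_mono nhdsWithin_le_nhds,
      Ioo_mem_nhdsLT_of_mem (show (1:ℝ) ∈ Set.Ioc 0 1 by norm_num)] with x hQx hx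
    have hx01 : 0 < x ∧ x < 1 := ⟨hx.1, hx.2⟩
    have hxabs : |x| < 1 := by rw [abs_of_pos hx01.1]; exact hx01.2
    have hQle : Q x ≤ ∑' k : ℕ, (-cc α β δ (k+1)) * x ^ (k+1) := by
      apply Summable.sum_le_tsum (Finset.range M) _ (htail_summable x hxabs)
      intro k _
      have := cc_neg hα₁ hα₂ hβ hδ (k+1) (by omega)
      have hxp : (0:ℝ) < x ^ (k+1) := pow_pos hx01.1 _
      nlinarith
    rw [hFx x hxabs]
    have : 1 - b < Q x := hQx
    linarith
  refine ⟨h1, h2, ?_⟩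
  -- Part 3
  · have hev1 : ∀ᶠ x in nhdsWithin (1:ℝ) (Set.Iio 1), F x ≤ -1 :=
      h2.eventually_le_atBot (-1)
    have hev2 : ∀ᶠ x in nhdsWithin (1:ℝ) (Set.Iio 1), x ∈ Set.Ioo (0:ℝ) 1 := by
      filter_upwards [Ioo_mem_nhdsLT_of_mem (show (1:ℝ) ∈ Set.Ioc 0 1 by norm_num)]
        with x hx using hx
    have hev := hev1.and hev2
    obtain ⟨x₀, hFx₀, hx₀⟩ := hev.exists
    have hcont : ContinuousOn F (Set.Icc 0 x₀) := by
      rw [hFcc, continuousOn_iff_continuous_restrict]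
      apply continuous_tsum (u := fun k => C₀ * x₀ ^ k)
      · intro k
        exact Continuous.mul continuous_const ((continuous_subtype_val).pow k)
      · exact (summable_geometric_of_lt_one (le_of_lt hx₀.1) hx₀.2).mul_left C₀
      · rintro k ⟨y, hy⟩
        simp only [Set.restrict_apply]
        rw [Real.norm_eq_abs, abs_mul, abs_pow]
        have hy' : |y| ≤ x₀ := by
          rw [abs_of_nonneg hy.1]; exact hy.2
        exact mul_le_mul (habs k) (pow_le_pow_left₀ (abs_nonneg y) hy' k)
          (by positivity) (le_trans zero_le_one hC₀1)
    have hivt := intermediate_value_Ioo' (le_of_lt hx₀.1) hcont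
    have h0mem : (0:ℝ) ∈ Set.Ioo (F x₀) (F 0) := by
      constructor
      · linarith
      · rw [h1]; norm_num
    obtain ⟨x, hx, hFx0⟩ := hivt h0mem
    exact ⟨x, ⟨hx.1, lt_trans hx.2 hx₀.2⟩, hFx0⟩
end
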